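/- arXiv:1501.03760 — 2 statements merged into one kernel-verified Lean document; each statement's English description precedes it below -/
import Mathlib

section
/- Consider the system i ḋ₂ = −|d₂|²d₂ + 2|d₋₂|²d₂ + 2 conj(d₋₂) d₀², i ḋ₋₂ = −|d₋₂|²d₋₂ + 2|d₂|²d₋₂ + 2 conj(d₂) d₀², i ḋ₀ = 4 d₂ d₋₂ conj(d₀). Then for any λ, β₁, β₂ ∈ ℝ, the function (d₂,d₋₂,d₀)(t) = λ (√(2/9) e^{iβ₁}, √(2/9) e^{iβ₂}, i √(5/9) e^{i(β₁+β₂)/2}) e^{iμt} with μ = (8/9)λ² is an exact solution. -/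
/-! The claimed curve is a stationary wave `d(t) = c e^{iμt}`. The nonlinearity `N` of the system is
cubic and gauge covariant, `N(c e^{iθ}) = e^{iθ} N(c)`, so `d` solves `i ḋ = N(d)` as soon as the
profile satisfies `N(c) = -μ c`. For the profile `(λ a u, λ a v, i λ b w)` with unit `u, v, w`,
`w² = u v`, one computes `N(c) = (λ²(a² - 2b²) c₂, λ²(a² - 2b²) c₋₂, -4λ²a² c₀)`, and both
frequencies equal `-(8/9) λ²` when `a² = 2/9`, `b² = 5/9`. -/

open Complex ComplexConjugate

namespace CREquationE2

/- `sideField` is the right-hand side of the `d₂`-equation, and of the `d₋₂`-equation with `x, y`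
swapped; `centerField` is that of the `d₀`-equation. -/
noncomputable def sideField (x y z : ℂ) : ℂ :=
  -‖x‖ ^ 2 * x + 2 * ‖y‖ ^ 2 * x + 2 * conj y * z ^ 2

def centerField (x y z : ℂ) : ℂ :=
  4 * x * y * conj z

lemma sideField_mul_of_norm_eq_one (x y z : ℂ) {e : ℂ} (he : ‖e‖ = 1) :
    sideField (x * e) (y * e) (z * e) = sideField x y z * e := by
  have he' : conj e * e = 1 := by rw [conj_mul', he]; norm_num
  simp only [sideField, norm_mul, he, mul_one, map_mul]
  linear_combination 2 * conj y * z ^ 2 * e * he'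

lemma centerField_mul_of_norm_eq_one (x y z : ℂ) {e : ℂ} (he : ‖e‖ = 1) :
    centerField (x * e) (y * e) (z * e) = centerField x y z * e := by
  have he' : conj e * e = 1 := by rw [conj_mul', he]; norm_num
  simp only [centerField, map_mul]
  linear_combination 4 * x * y * conj z * e * he'

lemma hasDerivAt_mul_exp_I_mul (c : ℂ) (μ t : ℝ) :
    HasDerivAt (fun s : ℝ => c * exp (I * μ * s)) (I * μ * (c * exp (I * μ * t))) t := by
  have h := ((hasDerivAt_id (t : ℂ)).const_mul (I * μ)).cexp.comp_ofReal.const_mul c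
  simp only [id, mul_one] at h
  exact h.congr_deriv (by ring)

lemma hasDerivAt_stationary_wave {F : ℂ → ℂ → ℂ → ℂ}
    (hF : ∀ x y z e, ‖e‖ = 1 → F (x * e) (y * e) (z * e) = F x y z * e)
    {c c' c'' : ℂ} {μ : ℝ} (hc : F c c' c'' = -μ * c) (t : ℝ) :
    HasDerivAt (fun s : ℝ => c * exp (I * μ * s))
      (-I * F (c * exp (I * μ * t)) (c' * exp (I * μ * t)) (c'' * exp (I * μ * t))) t := by
  have he : ‖exp (I * μ * t)‖ = 1 := by
    rw [mul_assoc, ← ofReal_mul]; exact norm_exp_I_mul_ofReal _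
  rw [hF _ _ _ _ he, hc]
  exact (hasDerivAt_mul_exp_I_mul c μ t).congr_deriv (by ring)

variable (lam a b : ℝ) {u v w : ℂ}

lemma sideField_profile (hu : ‖u‖ = 1) (hv : ‖v‖ = 1) (hw : w ^ 2 = u * v) :
    sideField (lam * a * u) (lam * a * v) (lam * I * b * w) =
      (lam ^ 2 * (a ^ 2 - 2 * b ^ 2) : ℝ) * (lam * a * u) := by
  have hv' : conj v * v = 1 := by rw [conj_mul', hv]; norm_num
  have hnorm : ∀ z : ℂ, ‖z‖ = 1 → ((‖(lam : ℂ) * a * z‖ : ℝ) : ℂ) ^ 2 = lam ^ 2 * a ^ 2 := by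
    intro z hz
    rw [← ofReal_pow, norm_mul, norm_mul, hz, norm_real, norm_real, Real.norm_eq_abs,
      Real.norm_eq_abs, mul_one, mul_pow, sq_abs, sq_abs]
    push_cast; ring
  simp only [sideField, hnorm u hu, hnorm v hv, map_mul, conj_ofReal]
  push_cast
  linear_combination (-2 * lam ^ 3 * a * b ^ 2 * conj v) * hw -
    (2 * lam ^ 3 * a * b ^ 2 * u) * hv' + (2 * lam ^ 3 * a * b ^ 2 * conj v * w ^ 2) * I_sq

lemma centerField_profile (hw : w ^ 2 = u * v) (hw1 : ‖w‖ = 1) :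
    centerField (lam * a * u) (lam * a * v) (lam * I * b * w) =
      (-4 * lam ^ 2 * a ^ 2 : ℝ) * (lam * I * b * w) := by
  have hw' : w * conj w = 1 := by rw [mul_conj', hw1]; norm_num
  simp only [centerField, map_mul, conj_ofReal, conj_I]
  push_cast
  linear_combination (4 * lam ^ 3 * a ^ 2 * b * I * conj w) * hw -
    (4 * lam ^ 3 * a ^ 2 * b * I * w) * hw'

end CREquationE2

open CREquationE2 in
theorem E2_stationary_wave_e (lam beta1 beta2 : ℝ)
    (d2 dm2 d0 : ℝ → ℂ) (mu : ℝ) (hmu : mu = (8 / 9) * lam ^ 2)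
    (hd2 : ∀ t, d2 t = (lam : ℂ) * Real.sqrt (2 / 9) * Complex.exp (Complex.I * beta1) *
        Complex.exp (Complex.I * mu * t))
    (hdm2 : ∀ t, dm2 t = (lam : ℂ) * Real.sqrt (2 / 9) * Complex.exp (Complex.I * beta2) *
        Complex.exp (Complex.I * mu * t))
    (hd0 : ∀ t, d0 t = (lam : ℂ) * Complex.I * Real.sqrt (5 / 9) *
        Complex.exp (Complex.I * ((beta1 + beta2) / 2)) * Complex.exp (Complex.I * mu * t)) :
    (∀ t, HasDerivAt d2 (-Complex.I *
      (-‖d2 t‖ ^ 2 * d2 t + 2 * ‖dm2 t‖ ^ 2 * d2 t +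
        2 * (starRingEnd ℂ) (dm2 t) * (d0 t) ^ 2)) t) ∧
    (∀ t, HasDerivAt dm2 (-Complex.I *
      (-‖dm2 t‖ ^ 2 * dm2 t + 2 * ‖d2 t‖ ^ 2 * dm2 t +
        2 * (starRingEnd ℂ) (d2 t) * (d0 t) ^ 2)) t) ∧
    (∀ t, HasDerivAt d0 (-Complex.I *
      (4 * d2 t * dm2 t * (starRingEnd ℂ) (d0 t))) t) := by
  have hunit : ∀ β : ℝ, ‖exp (I * β)‖ = 1 := norm_exp_I_mul_ofReal
  have hhalf : exp (I * ((beta1 + beta2) / 2)) ^ 2 = exp (I * beta1) * exp (I * beta2) := by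
    rw [sq, ← exp_add, ← exp_add]; ring_nf
  have hhalf1 : ‖exp (I * ((beta1 + beta2) / 2))‖ = 1 := by
    exact_mod_cast hunit ((beta1 + beta2) / 2)
  have ha : Real.sqrt (2 / 9) ^ 2 = 2 / 9 := Real.sq_sqrt (by norm_num)
  have hb : Real.sqrt (5 / 9) ^ 2 = 5 / 9 := Real.sq_sqrt (by norm_num)
  have hside :
      ((lam ^ 2 * (Real.sqrt (2 / 9) ^ 2 - 2 * Real.sqrt (5 / 9) ^ 2) : ℝ) : ℂ) = -mu := by
    rw [ha, hb, hmu]; push_cast; ring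
  have hcenter : ((-4 * lam ^ 2 * Real.sqrt (2 / 9) ^ 2 : ℝ) : ℂ) = -mu := by
    rw [ha, hmu]; push_cast; ring
  obtain rfl := funext hd2
  obtain rfl := funext hdm2
  obtain rfl := funext hd0
  refine ⟨hasDerivAt_stationary_wave sideField_mul_of_norm_eq_one ?_,
    hasDerivAt_stationary_wave sideField_mul_of_norm_eq_one ?_,
    hasDerivAt_stationary_wave (F := fun z x y => centerField x y z)
      (fun z x y _ he => centerField_mul_of_norm_eq_one x y z he) ?_⟩
  · rw [sideField_profile _ _ _ (hunit _) (hunit _) hhalf, hside]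
  · rw [sideField_profile _ _ _ (hunit _) (hunit _) (hhalf.trans (mul_comm _ _)), hside]
  · rw [centerField_profile _ _ _ hhalf hhalf1, hcenter]
end

section
/- Let λ ∈ (0,1). Then each of the three quantities 1/(λ^{λ/2}(2−λ)^{1−λ/2}), (1+λ)^{1+λ}/(λ^λ 2^{1+λ}), and (3−λ)^{3−λ}/((2−λ)^{2−λ} 2^{3−λ}) lies strictly in the interval (0,1). -/
/-! All three bounds are strict midpoint convexity of `t ↦ t log t`, exponentiated: the midpoint
of `λ` and `2 - λ` is `1`, while the second and third quantities compare the midpoint of `1` and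
`x` with `1` and `x`, for `x = λ` and `x = 2 - λ`. -/

open Real

theorem mul_log_midpoint_lt {a b : ℝ} (ha : 0 ≤ a) (hb : 0 ≤ b) (hab : a ≠ b) :
    (a + b) * log ((a + b) / 2) < a * log a + b * log b := by
  have h := strictConvexOn_mul_log.2 (Set.mem_Ici.2 ha) (Set.mem_Ici.2 hb) hab
    (by norm_num : (0 : ℝ) < 1 / 2) (by norm_num : (0 : ℝ) < 1 / 2) (by norm_num)
  simp only [smul_eq_mul] at h
  rw [show 1 / 2 * a + 1 / 2 * b = (a + b) / 2 by ring] at h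
  linarith

theorem midpoint_rpow_lt_rpow_self_mul {a b : ℝ} (ha : 0 < a) (hb : 0 < b) (hab : a ≠ b) :
    ((a + b) / 2) ^ (a + b) < a ^ a * b ^ b := by
  rw [← log_lt_log_iff (by positivity) (by positivity), log_rpow (by positivity),
    log_mul (by positivity) (by positivity), log_rpow ha, log_rpow hb]
  exact mul_log_midpoint_lt ha.le hb.le hab

theorem one_add_rpow_div_mem_Ioo {x : ℝ} (hx : 0 < x) (hx1 : x ≠ 1) :
    (1 + x) ^ (1 + x) / (x ^ x * (2 : ℝ) ^ (1 + x)) ∈ Set.Ioo (0 : ℝ) 1 := by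
  refine ⟨by positivity, ?_⟩
  rw [div_lt_one (by positivity), ← div_lt_iff₀ (by positivity),
    ← div_rpow (by positivity) zero_le_two]
  simpa [add_comm] using midpoint_rpow_lt_rpow_self_mul one_pos hx hx1.symm

theorem stirling_rates_in_unit_interval (l : ℝ) (hl : l ∈ Set.Ioo (0 : ℝ) 1) :
    (1 / (l ^ (l / 2) * (2 - l) ^ (1 - l / 2)) ∈ Set.Ioo (0 : ℝ) 1) ∧
    ((1 + l) ^ (1 + l) / (l ^ l * (2 : ℝ) ^ (1 + l)) ∈ Set.Ioo (0 : ℝ) 1) ∧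
    ((3 - l) ^ (3 - l) / ((2 - l) ^ (2 - l) * (2 : ℝ) ^ (3 - l)) ∈ Set.Ioo (0 : ℝ) 1) := by
  obtain ⟨hl0, hl1⟩ := hl
  have hl2 : 0 < 2 - l := by linarith
  have hsquare : 1 < l ^ l * (2 - l) ^ (2 - l) := by
    simpa using midpoint_rpow_lt_rpow_self_mul hl0 hl2 (by linarith)
  have hsqrt :
      l ^ (l / 2) * (2 - l) ^ (1 - l / 2) = (l ^ l * (2 - l) ^ (2 - l)) ^ (1 / 2 : ℝ) := by
    rw [mul_rpow (by positivity) (by positivity), ← rpow_mul hl0.le, ← rpow_mul hl2.le]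
    ring_nf
  refine ⟨⟨by positivity, ?_⟩, one_add_rpow_div_mem_Ioo hl0 hl1.ne, ?_⟩
  · rw [div_lt_one (by positivity), hsqrt]
    exact one_lt_rpow hsquare (by norm_num)
  · simpa [show 1 + (2 - l) = 3 - l by ring] using one_add_rpow_div_mem_Ioo hl2 (by linarith)
end
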